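/- arXiv:1502.06046 — 6 statements merged into one kernel-verified Lean document; each statement's English description precedes it below -/
import Mathlib

section
/- For λ > 0 and z < 0 sufficiently negative, the univariate skew normal cdf F(z) = ∫_{-∞}^z 2φ(t)Φ(λt) dt satisfies the two-sided bound: (1/π) e^{-(1+λ²)z²/2} [ z^{-2}/(λ(1+λ²)) - (2/(λ(1+λ²)) + 1/(λ³(1+λ²))) z^{-4} ] < F(z) < (1/π) e^{-(1+λ²)z²/2} · z^{-2}/(λ(1+λ²)). -/
/-!
All four bounds come from one device: for an explicit `G` vanishing at `-∞` whose derivative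
strictly dominates (or is dominated by) the integrand on `(-∞, z]`, `∫_{-∞}^z` of the integrand
is strictly below (above) `G z`. With `G = φ(t) · (polynomial in 1/t)` this gives the Mills-ratio
bounds `φ(x)(-1/x + 1/x³) < Φ(x) < -φ(x)/x` for `x < 0`. Multiplying them by `2φ(t)` at `x = λt`
and using `2φ(t)φ(λt) = e^{-(1+λ²)t²/2}/π` sandwiches the skew normal density between
`e^{-(1+λ²)t²/2}/π` times polynomials in `1/t`, and the device applies once more.
-/

open Real MeasureTheory Filter Set

open Topology ProbabilityTheory

noncomputable def stdNormalPdf (t : ℝ) : ℝ := (Real.sqrt (2 * π))⁻¹ * Real.exp (-t ^ 2 / 2)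

noncomputable def stdNormalCdf (z : ℝ) : ℝ := ∫ t in Set.Iic z, stdNormalPdf t

/-- The skew normal SN(l) cdf, F(z) = ∫_{-∞}^z 2 φ(t) Φ(l t) dt. -/
noncomputable def skewNormalCdf (l z : ℝ) : ℝ :=
  ∫ t in Set.Iic z, 2 * stdNormalPdf t * stdNormalCdf (l * t)

theorem integral_Iic_lt_of_hasDerivAt {f g G : ℝ → ℝ} {z : ℝ}
    (hG : ∀ t ∈ Iic z, HasDerivAt G (g t) t) (hG_lim : Tendsto G atBot (𝓝 0))
    (hf : IntegrableOn f (Iic z)) (hg : IntegrableOn g (Iic z))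
    (hfg : ∀ t ∈ Iic z, f t < g t) :
    ∫ t in Iic z, f t < G z := by
  have hFTC : ∫ t in Iic z, g t = G z := by
    rw [integral_Iic_of_hasDerivAt_of_tendsto' hG hg hG_lim, sub_zero]
  have hgap : 0 < ∫ t in Iic z, (g t - f t) := by
    rw [setIntegral_pos_iff_support_of_nonneg_ae
      (ae_restrict_of_forall_mem measurableSet_Iic fun t ht => (sub_pos.2 (hfg t ht)).le)
      (hg.sub hf)]
    have : Function.support (fun t => g t - f t) ∩ Iic z = Iic z :=
      inter_eq_right.2 fun t ht => (sub_pos.2 (hfg t ht)).ne'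
    simp [this]
  rw [integral_sub hg hf, hFTC] at hgap
  linarith

theorem lt_integral_Iic_of_hasDerivAt {f g G : ℝ → ℝ} {z : ℝ}
    (hG : ∀ t ∈ Iic z, HasDerivAt G (g t) t) (hG_lim : Tendsto G atBot (𝓝 0))
    (hf : IntegrableOn f (Iic z)) (hg : IntegrableOn g (Iic z))
    (hgf : ∀ t ∈ Iic z, g t < f t) :
    G z < ∫ t in Iic z, f t := by
  have := integral_Iic_lt_of_hasDerivAt (f := fun t => -f t) (g := fun t => -g t)
    (G := fun t => -G t) (fun t ht => (hG t ht).neg)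
    (by simpa using hG_lim.neg) hf.neg hg.neg (fun t ht => neg_lt_neg (hgf t ht))
  simp only [integral_neg] at this
  linarith

theorem MeasureTheory.IntegrableOn.mul_comp_inv_Iic {f r : ℝ → ℝ} {z : ℝ}
    (hf : IntegrableOn f (Iic z)) (hr : Continuous r) (hz : z < 0) :
    IntegrableOn (fun t => f t * r t⁻¹) (Iic z) := by
  obtain ⟨C, hC⟩ :=
    (isCompact_Icc (a := z⁻¹) (b := 0)).exists_bound_of_continuousOn hr.continuousOn
  refine hf.mul_bdd (c := C) (hr.measurable.comp measurable_inv).aestronglyMeasurable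
    (ae_restrict_of_forall_mem measurableSet_Iic fun t ht => hC _ ?_)
  have ht' : t < 0 := lt_of_le_of_lt ht hz
  exact ⟨(inv_le_inv_of_neg hz ht').2 ht, (inv_neg''.2 ht').le⟩

theorem Filter.Tendsto.mul_comp_inv_atBot {ψ r : ℝ → ℝ} (hψ : Tendsto ψ atBot (𝓝 0))
    (hr : ContinuousAt r 0) : Tendsto (fun t => ψ t * r t⁻¹) atBot (𝓝 0) := by
  simpa using hψ.mul (hr.tendsto.comp tendsto_inv_atBot_zero)

theorem hasDerivAt_exp_neg_mul_sq_div_two (c t : ℝ) :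
    HasDerivAt (fun t => exp (-c * t ^ 2 / 2)) (-c * t * exp (-c * t ^ 2 / 2)) t := by
  convert (((hasDerivAt_pow 2 t).const_mul (-c)).div_const 2).exp using 1
  push_cast; ring

theorem tendsto_mul_exp_neg_mul_sq_div_two_atBot (K : ℝ) {c : ℝ} (hc : 0 < c) :
    Tendsto (fun t => K * exp (-c * t ^ 2 / 2)) atBot (𝓝 0) := by
  have : Tendsto (fun t : ℝ => c / 2 * (-t) ^ 2) atBot atTop :=
    ((tendsto_pow_atTop two_ne_zero).comp tendsto_neg_atBot_atTop).const_mul_atTop (by positivity)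
  have hexp : Tendsto (fun t => exp (-c * t ^ 2 / 2)) atBot (𝓝 0) :=
    tendsto_exp_atBot.comp <| (tendsto_neg_atTop_atBot.comp this).congr fun t => by simp; ring
  simpa using hexp.const_mul K

theorem integrable_exp_neg_mul_sq_div_two {c : ℝ} (hc : 0 < c) :
    Integrable (fun t => exp (-c * t ^ 2 / 2)) :=
  (integrable_exp_neg_mul_sq (b := c / 2) (by positivity)).congr
    (ae_of_all _ fun t => by ring_nf)

theorem stdNormalPdf_eq_gaussianPDFReal : stdNormalPdf = gaussianPDFReal 0 1 := by
  ext t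
  simp [stdNormalPdf, gaussianPDFReal]

theorem stdNormalCdf_eq_cdf : stdNormalCdf = cdf (gaussianReal 0 1) := by
  ext x
  rw [cdf_eq_real, measureReal_def, gaussianReal_apply_eq_integral _ one_ne_zero,
    ENNReal.toReal_ofReal (setIntegral_nonneg measurableSet_Iic fun t _ =>
      gaussianPDFReal_nonneg _ _ t), stdNormalCdf, stdNormalPdf_eq_gaussianPDFReal]

theorem stdNormalPdf_pos (t : ℝ) : 0 < stdNormalPdf t := by
  rw [stdNormalPdf_eq_gaussianPDFReal]
  exact gaussianPDFReal_pos _ _ _ one_ne_zero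

theorem integrable_stdNormalPdf : Integrable stdNormalPdf := by
  rw [stdNormalPdf_eq_gaussianPDFReal]
  exact integrable_gaussianPDFReal _ _

theorem hasDerivAt_stdNormalPdf (t : ℝ) : HasDerivAt stdNormalPdf (-t * stdNormalPdf t) t := by
  have h := (hasDerivAt_exp_neg_mul_sq_div_two 1 t).const_mul (√(2 * π))⁻¹
  simp only [neg_mul, one_mul] at h
  refine h.congr_deriv ?_
  simp only [stdNormalPdf]; ring

theorem tendsto_stdNormalPdf_atBot : Tendsto stdNormalPdf atBot (𝓝 0) := by
  have h := tendsto_mul_exp_neg_mul_sq_div_two_atBot (√(2 * π))⁻¹ one_pos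
  simp only [neg_mul, one_mul] at h
  exact h

theorem stdNormalCdf_lt_of_neg {x : ℝ} (hx : x < 0) :
    stdNormalCdf x < stdNormalPdf x * -x⁻¹ := by
  refine integral_Iic_lt_of_hasDerivAt (G := fun t => stdNormalPdf t * -t⁻¹)
    (g := fun t => stdNormalPdf t * (1 + t⁻¹ ^ 2)) (fun t ht => ?_)
    (tendsto_stdNormalPdf_atBot.mul_comp_inv_atBot continuousAt_neg)
    integrable_stdNormalPdf.integrableOn
    (integrable_stdNormalPdf.integrableOn.mul_comp_inv_Iic (r := fun u => 1 + u ^ 2)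
      (by fun_prop) hx) (fun t ht => ?_) <;> have ht0 : t ≠ 0 := (lt_of_le_of_lt ht hx).ne
  · refine ((hasDerivAt_stdNormalPdf t).mul (hasDerivAt_inv ht0).neg).congr_deriv ?_
    simp only [Pi.neg_apply]
    field_simp
  · exact lt_mul_of_one_lt_right (stdNormalPdf_pos t) (lt_add_of_pos_right 1 (by positivity))

theorem lt_stdNormalCdf_of_neg {x : ℝ} (hx : x < 0) :
    stdNormalPdf x * (-x⁻¹ + x⁻¹ ^ 3) < stdNormalCdf x := by
  refine lt_integral_Iic_of_hasDerivAt (G := fun t => stdNormalPdf t * (-t⁻¹ + t⁻¹ ^ 3))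
    (g := fun t => stdNormalPdf t * (1 - 3 * t⁻¹ ^ 4)) (fun t ht => ?_)
    (tendsto_stdNormalPdf_atBot.mul_comp_inv_atBot (r := fun u => -u + u ^ 3) (by fun_prop))
    integrable_stdNormalPdf.integrableOn
    (integrable_stdNormalPdf.integrableOn.mul_comp_inv_Iic (r := fun u => 1 - 3 * u ^ 4)
      (by fun_prop) hx) (fun t ht => ?_) <;> have ht0 : t ≠ 0 := (lt_of_le_of_lt ht hx).ne
  · refine ((hasDerivAt_stdNormalPdf t).mul
      ((hasDerivAt_inv ht0).neg.add ((hasDerivAt_inv ht0).pow 3))).congr_deriv ?_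
    simp only [Pi.neg_apply, Pi.add_apply, Pi.pow_apply, inv_pow]
    field_simp
    ring
  · exact mul_lt_of_lt_one_right (stdNormalPdf_pos t) (sub_lt_self 1 (by positivity))

theorem two_mul_stdNormalPdf_mul_stdNormalPdf (l t : ℝ) :
    2 * stdNormalPdf t * stdNormalPdf (l * t) = 1 / π * exp (-(1 + l ^ 2) * t ^ 2 / 2) := by
  have hsq : √(2 * π) * √(2 * π) = 2 * π := Real.mul_self_sqrt (by positivity)
  calc 2 * stdNormalPdf t * stdNormalPdf (l * t)
      = 2 * (√(2 * π) * √(2 * π))⁻¹ * exp (-t ^ 2 / 2 + -(l * t) ^ 2 / 2) := by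
        rw [Real.exp_add, mul_inv]; simp only [stdNormalPdf]; ring
    _ = 1 / π * exp (-(1 + l ^ 2) * t ^ 2 / 2) := by
        rw [hsq]; field_simp; ring_nf

theorem integrable_skewNormalDensity (l : ℝ) :
    Integrable (fun t => 2 * stdNormalPdf t * stdNormalCdf (l * t)) := by
  refine (integrable_stdNormalPdf.const_mul 2).mul_bdd (c := 1) ?_ (ae_of_all _ fun t => ?_)
  · rw [stdNormalCdf_eq_cdf]
    exact ((monotone_cdf _).measurable.comp (measurable_const_mul l)).aestronglyMeasurable
  · rw [stdNormalCdf_eq_cdf, Real.norm_of_nonneg (cdf_nonneg _ _)]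
    exact cdf_le_one _ _

section SkewNormal

variable {l t : ℝ}

theorem skewNormalDensity_lt (hl : 0 < l) (ht : t < 0) :
    2 * stdNormalPdf t * stdNormalCdf (l * t)
      < 1 / π * exp (-(1 + l ^ 2) * t ^ 2 / 2) * -(l * t)⁻¹ := by
  rw [← two_mul_stdNormalPdf_mul_stdNormalPdf, mul_assoc (2 * stdNormalPdf t)]
  exact mul_lt_mul_of_pos_left (stdNormalCdf_lt_of_neg (mul_neg_of_pos_of_neg hl ht))
    (mul_pos two_pos (stdNormalPdf_pos t))

theorem lt_skewNormalDensity (hl : 0 < l) (ht : t < 0) :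
    1 / π * exp (-(1 + l ^ 2) * t ^ 2 / 2) * (-(l * t)⁻¹ + (l * t)⁻¹ ^ 3)
      < 2 * stdNormalPdf t * stdNormalCdf (l * t) := by
  rw [← two_mul_stdNormalPdf_mul_stdNormalPdf, mul_assoc (2 * stdNormalPdf t)]
  exact mul_lt_mul_of_pos_left (lt_stdNormalCdf_of_neg (mul_neg_of_pos_of_neg hl ht))
    (mul_pos two_pos (stdNormalPdf_pos t))

theorem skewNormalCdf_lt {z : ℝ} (hl : 0 < l) (hz : z < 0) :
    skewNormalCdf l z
      < 1 / π * exp (-(1 + l ^ 2) * z ^ 2 / 2) * (z⁻¹ ^ 2 / (l * (1 + l ^ 2))) := by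
  have ha : 0 < 1 + l ^ 2 := by positivity
  have hψ_lim := tendsto_mul_exp_neg_mul_sq_div_two_atBot (1 / π) ha
  have hψ_int :=
    ((integrable_exp_neg_mul_sq_div_two ha).const_mul (1 / π)).integrableOn (s := Iic z)
  refine integral_Iic_lt_of_hasDerivAt
    (G := fun t => 1 / π * exp (-(1 + l ^ 2) * t ^ 2 / 2) * (t⁻¹ ^ 2 / (l * (1 + l ^ 2))))
    (g := fun t => 1 / π * exp (-(1 + l ^ 2) * t ^ 2 / 2) *
      (-t⁻¹ / l - 2 * t⁻¹ ^ 3 / (l * (1 + l ^ 2)))) (fun t ht => ?_)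
    (hψ_lim.mul_comp_inv_atBot (r := fun u => u ^ 2 / (l * (1 + l ^ 2))) (by fun_prop))
    (integrable_skewNormalDensity l).integrableOn
    (hψ_int.mul_comp_inv_Iic (r := fun u => -u / l - 2 * u ^ 3 / (l * (1 + l ^ 2)))
      (by fun_prop) hz) (fun t ht => ?_) <;> have ht0 : t < 0 := lt_of_le_of_lt ht hz
  · refine (((hasDerivAt_exp_neg_mul_sq_div_two _ t).const_mul (1 / π)).mul
      (((hasDerivAt_inv ht0.ne).pow 2).div_const _)).congr_deriv ?_
    have := ht0.ne
    simp only [Pi.pow_apply, inv_pow]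
    field_simp
    ring
  · refine (skewNormalDensity_lt hl ht0).trans (mul_lt_mul_of_pos_left ?_ (by positivity))
    have hcube : 2 * t⁻¹ ^ 3 / (l * (1 + l ^ 2)) < 0 :=
      div_neg_of_neg_of_pos (by nlinarith [Odd.pow_neg (by decide : Odd 3) (inv_lt_zero.2 ht0)])
        (by positivity)
    have : -(l * t)⁻¹ = -t⁻¹ / l := by ring
    linarith

theorem lt_skewNormalCdf {B z : ℝ} (hl : 0 < l)
    (hB : 2 / (l * (1 + l ^ 2) ^ 2) + 1 / (l ^ 3 * (1 + l ^ 2)) ≤ B) (hz : z < 0) :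
    1 / π * exp (-(1 + l ^ 2) * z ^ 2 / 2) * (z⁻¹ ^ 2 / (l * (1 + l ^ 2)) - B * z⁻¹ ^ 4)
      < skewNormalCdf l z := by
  have ha : 0 < 1 + l ^ 2 := by positivity
  have hψ_lim := tendsto_mul_exp_neg_mul_sq_div_two_atBot (1 / π) ha
  have hψ_int :=
    ((integrable_exp_neg_mul_sq_div_two ha).const_mul (1 / π)).integrableOn (s := Iic z)
  have hB0 : 0 < B := lt_of_lt_of_le (by positivity) hB
  -- `hB` makes the `t⁻¹ ^ 3` coefficient of `g` dominate the `1 / l ^ 3` of `lt_skewNormalDensity`.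
  have hc : 0 ≤ (1 + l ^ 2) * B - 2 / (l * (1 + l ^ 2)) - 1 / l ^ 3 := by
    have h := mul_le_mul_of_nonneg_left hB ha.le
    have e : (1 + l ^ 2) * (2 / (l * (1 + l ^ 2) ^ 2) + 1 / (l ^ 3 * (1 + l ^ 2)))
        = 2 / (l * (1 + l ^ 2)) + 1 / l ^ 3 := by
      field_simp
    linarith
  refine lt_integral_Iic_of_hasDerivAt
    (G := fun t => 1 / π * exp (-(1 + l ^ 2) * t ^ 2 / 2) *
      (t⁻¹ ^ 2 / (l * (1 + l ^ 2)) - B * t⁻¹ ^ 4))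
    (g := fun t => 1 / π * exp (-(1 + l ^ 2) * t ^ 2 / 2) *
      (-t⁻¹ / l + ((1 + l ^ 2) * B - 2 / (l * (1 + l ^ 2))) * t⁻¹ ^ 3 + 4 * B * t⁻¹ ^ 5))
    (fun t ht => ?_)
    (hψ_lim.mul_comp_inv_atBot (r := fun u => u ^ 2 / (l * (1 + l ^ 2)) - B * u ^ 4)
      (by fun_prop))
    (integrable_skewNormalDensity l).integrableOn
    (hψ_int.mul_comp_inv_Iic
      (r := fun u => -u / l + ((1 + l ^ 2) * B - 2 / (l * (1 + l ^ 2))) * u ^ 3 + 4 * B * u ^ 5)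
      (by fun_prop) hz) (fun t ht => ?_) <;> have ht0 : t < 0 := lt_of_le_of_lt ht hz
  · refine (((hasDerivAt_exp_neg_mul_sq_div_two _ t).const_mul (1 / π)).mul
      ((((hasDerivAt_inv ht0.ne).pow 2).div_const _).sub
        (((hasDerivAt_inv ht0.ne).pow 4).const_mul B))).congr_deriv ?_
    have := ht0.ne
    simp only [Pi.sub_apply, Pi.pow_apply, inv_pow]
    field_simp
    ring
  · refine lt_trans (mul_lt_mul_of_pos_left ?_ (by positivity)) (lt_skewNormalDensity hl ht0)
    have hu : t⁻¹ < 0 := inv_lt_zero.2 ht0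
    have h3 : ((1 + l ^ 2) * B - 2 / (l * (1 + l ^ 2)) - 1 / l ^ 3) * t⁻¹ ^ 3 ≤ 0 :=
      mul_nonpos_of_nonneg_of_nonpos hc (Odd.pow_neg (by decide) hu).le
    have h5 : 4 * B * t⁻¹ ^ 5 < 0 :=
      mul_neg_of_pos_of_neg (by positivity) (Odd.pow_neg (by decide) hu)
    have e : -(l * t)⁻¹ + (l * t)⁻¹ ^ 3 = -t⁻¹ / l + 1 / l ^ 3 * t⁻¹ ^ 3 := by ring
    rw [e]
    linarith

end SkewNormal

/-- Capitanio-type two-sided tail bound for the skew normal cdf when l > 0,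
for z sufficiently negative. -/
theorem skewNormalCdf_tail_bounds (l : ℝ) (hl : 0 < l) :
    ∃ z₀ : ℝ, z₀ < 0 ∧ ∀ z : ℝ, z < z₀ →
      (1 / π) * Real.exp (-(1 + l ^ 2) * z ^ 2 / 2) *
          (z ^ (-2 : ℤ) / (l * (1 + l ^ 2)) -
            (2 / (l * (1 + l ^ 2)) + 1 / (l ^ 3 * (1 + l ^ 2))) * z ^ (-4 : ℤ))
        < skewNormalCdf l z ∧
      skewNormalCdf l z <
        (1 / π) * Real.exp (-(1 + l ^ 2) * z ^ 2 / 2) * (z ^ (-2 : ℤ) / (l * (1 + l ^ 2))) := by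
  refine ⟨-1, by norm_num, fun z hz => ?_⟩
  have hz0 : z < 0 := hz.trans (by norm_num)
  have hB : 2 / (l * (1 + l ^ 2) ^ 2) + 1 / (l ^ 3 * (1 + l ^ 2))
      ≤ 2 / (l * (1 + l ^ 2)) + 1 / (l ^ 3 * (1 + l ^ 2)) := by
    have : 1 + l ^ 2 ≤ (1 + l ^ 2) ^ 2 := by nlinarith
    gcongr
  simp only [zpow_neg, zpow_ofNat, ← inv_pow]
  exact ⟨lt_skewNormalCdf hl hB hz0, skewNormalCdf_lt hl hz0⟩
end

section
/- The Lambert W function (inverse on [0,∞) of w ↦ w e^w) satisfies W(z) = log z - log log z + O((log log z)/(log z)) as z → ∞. -/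
open Real Filter Asymptotics

/-! For `z ≥ e` put `w = W z ≥ 1`. Taking logarithms of `w eʷ = z` gives `log z = w + log w`, so the
error term is exactly `log (w + log w) - log w = log (1 + log w / w)`, which lies between `0` and
`log w / w`. Since `w ≤ log z ≤ 2w` and `log w ≤ log log z`, this is at most
`2 log log z / log z`. -/

lemma strictMonoOn_mul_exp : StrictMonoOn (fun x : ℝ => x * exp x) (Set.Ici 0) :=
  fun x hx _ _ hxy => mul_lt_mul' hxy.le (exp_lt_exp.2 hxy) (exp_pos x).le (hx.trans_lt hxy)

lemma log_mul_exp {w : ℝ} (hw : 0 < w) : log (w * exp w) = w + log w := by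
  rw [log_mul hw.ne' (exp_pos w).ne', log_exp, add_comm]

lemma log_add_sub_log_le {a b : ℝ} (ha : 0 < a) (hab : 0 < a + b) :
    log (a + b) - log a ≤ b / a := by
  rw [← log_div hab.ne' ha.ne']
  calc log ((a + b) / a) ≤ (a + b) / a - 1 := log_le_sub_one_of_pos (div_pos hab ha)
    _ = b / a := by field_simp; ring

lemma log_div_self_le_two_mul_log_div_add_log {w : ℝ} (hw : 1 ≤ w) :
    log w / w ≤ 2 * (log (w + log w) / (w + log w)) := by
  have hw0 : 0 < w := by linarith
  have hlogw : 0 ≤ log w := log_nonneg hw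
  have hlog_le : log w ≤ log (w + log w) := log_le_log hw0 (by linarith)
  have hsum_le : w + log w ≤ 2 * w := by linarith [log_le_sub_one_of_pos hw0]
  calc log w / w = 2 * (log w / (2 * w)) := by field_simp
    _ ≤ 2 * (log (w + log w) / (w + log w)) := by
      gcongr 2 * ?_
      exact div_le_div₀ (hlogw.trans hlog_le) hlog_le (by linarith) hsum_le

lemma abs_sub_log_sub_log_log_le {w z : ℝ} (hw : 1 ≤ w) (hwz : w * exp w = z) :
    |w - (log z - log (log z))| ≤ 2 * |log (log z) / log z| := by
  subst hwz
  have hw0 : 0 < w := by linarith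
  have hlogw : 0 ≤ log w := log_nonneg hw
  have hsum_pos : 0 < w + log w := by linarith
  rw [log_mul_exp hw0, show w - (w + log w - log (w + log w)) = log (w + log w) - log w by ring,
    abs_of_nonneg (sub_nonneg.2 (log_le_log hw0 (by linarith))),
    abs_of_nonneg (div_nonneg (log_nonneg (by linarith)) hsum_pos.le)]
  exact (log_add_sub_log_le hw0 hsum_pos).trans (log_div_self_le_two_mul_log_div_add_log hw)

/-- The Lambert W function (inverse on [0,∞) of w ↦ w eʷ) satisfies
W(z) = log z - log log z + O((log log z)/(log z)) as z → ∞. -/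
theorem lambertW_asymptotics (W : ℝ → ℝ)
    (hW : ∀ z : ℝ, 0 ≤ z → 0 ≤ W z ∧ W z * Real.exp (W z) = z) :
    (fun z : ℝ => W z - (Real.log z - Real.log (Real.log z)))
      =O[atTop] (fun z : ℝ => Real.log (Real.log z) / Real.log z) := by
  refine isBigO_iff.2 ⟨2, ?_⟩
  filter_upwards [eventually_ge_atTop (exp 1)] with z hz
  obtain ⟨hW0, hWz⟩ := hW z ((exp_pos 1).le.trans hz)
  have hW1 : 1 ≤ W z :=
    (strictMonoOn_mul_exp.le_iff_le (Set.mem_Ici.2 zero_le_one) (Set.mem_Ici.2 hW0)).1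
      (by rwa [one_mul, hWz])
  simpa only [norm_eq_abs] using abs_sub_log_sub_log_log_le hW1 hWz
end

section
/- For λ > 0, the quantile function of the skew normal SN(λ) satisfies F⁻¹(u) ~ -√( -(2/(1+λ²)) log(-2πλ u log(2πλ u)) ) as u → 0⁺. -/
open Real MeasureTheory Filter Set

open Topology Asymptotics ProbabilityTheory

/-! For `z ≤ 0` the skew normal cdf is squeezed between Gaussian-type bounds: comparing with
`Φ(l z) · 2Φ(z)` from above and with the integrand on `(z - 1, z]` from below gives
`A + B z - (1 + l²) z² / 2 ≤ log F(z) ≤ log 2 - (1 + l²) z² / 2`, hence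
`log F(z) ~ -(1 + l²) z² / 2` as `z → -∞`. Since `F (Q u) = u` forces `Q u → -∞`, this yields
`log u ~ -(1 + l²) (Q u)² / 2`. The iterated logarithm in the target is of lower order,
`log (-(k u log (k u))) ~ log u` for `k = 2πl`, so taking square roots of
`(Q u)² ~ -(2 / (1 + l²)) log (-(k u log (k u)))` finishes the proof. -/

lemma le_setIntegral_Iic_of_le_on_Ioc {g : ℝ → ℝ} (hg : Integrable g) (hg_nonneg : 0 ≤ g)
    {x c : ℝ} (hc : ∀ t ∈ Ioc (x - 1) x, c ≤ g t) : c ≤ ∫ t in Iic x, g t :=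
  calc c = c * volume.real (Ioc (x - 1) x) := by simp
    _ ≤ ∫ t in Ioc (x - 1) x, g t :=
      setIntegral_ge_of_const_le_real measurableSet_Ioc (by simp) hc hg.integrableOn
    _ ≤ ∫ t in Iic x, g t :=
      setIntegral_mono_set hg.integrableOn (.of_forall hg_nonneg)
        (Ioc_subset_Iic_self.eventuallyLE)

lemma monotone_setIntegral_Iic {g : ℝ → ℝ} (hg : Integrable g) (hg_nonneg : 0 ≤ g) :
    Monotone fun x => ∫ t in Iic x, g t := fun _ _ hxy =>
  setIntegral_mono_set hg.integrableOn (.of_forall hg_nonneg) (Iic_subset_Iic.mpr hxy).eventuallyLE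

lemma tendsto_quadratic_div_sq_atBot (A B C : ℝ) :
    Tendsto (fun z : ℝ => (A + B * z + C * z ^ 2) / z ^ 2) atBot (𝓝 C) := by
  have hinv : Tendsto (fun z : ℝ => A * z⁻¹ ^ 2 + B * z⁻¹ + C) atBot
      (𝓝 (A * 0 ^ 2 + B * 0 + C)) :=
    ((continuous_const.mul (continuous_pow 2)).add (continuous_const.mul continuous_id)
      |>.add continuous_const |>.tendsto 0).comp tendsto_inv_atBot_zero
  simp only [zero_pow two_ne_zero, mul_zero, add_zero, zero_add] at hinv
  refine hinv.congr' ?_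
  filter_upwards [eventually_ne_atBot 0] with z hz
  field_simp

lemma isEquivalent_sq_of_quadratic_bounds {f : ℝ → ℝ} {A B A' B' C : ℝ} (hC : C ≠ 0)
    (hlo : ∀ᶠ z in atBot, A + B * z + C * z ^ 2 ≤ f z)
    (hhi : ∀ᶠ z in atBot, f z ≤ A' + B' * z + C * z ^ 2) :
    f ~[atBot] fun z => C * z ^ 2 := by
  have hratio : Tendsto (fun z => f z / z ^ 2) atBot (𝓝 C) := by
    refine tendsto_of_tendsto_of_tendsto_of_le_of_le' (tendsto_quadratic_div_sq_atBot A B C)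
      (tendsto_quadratic_div_sq_atBot A' B' C) ?_ ?_
    · filter_upwards [hlo] with z hz using div_le_div_of_nonneg_right hz (sq_nonneg z)
    · filter_upwards [hhi] with z hz using div_le_div_of_nonneg_right hz (sq_nonneg z)
  refine isEquivalent_of_tendsto_one ?_
  rw [← div_self hC]
  refine (hratio.div_const C).congr' ?_
  filter_upwards [eventually_ne_atBot 0] with z hz
  simp only [Pi.div_apply]
  field_simp

lemma tendsto_atBot_of_apply_eq {F Q : ℝ → ℝ} {l : Filter ℝ} (hF : Monotone F)
    (hF_pos : ∀ z, 0 < F z) (hl : l ≤ 𝓝 0) (hQ : ∀ᶠ u in l, F (Q u) = u) :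
    Tendsto Q l atBot := by
  refine tendsto_atBot.mpr fun M => ?_
  filter_upwards [hQ, hl (eventually_lt_nhds (hF_pos M))] with u hu hlt
  exact (hF.reflect_lt (hu.symm ▸ hlt)).le

lemma isEquivalent_log_neg_mul_log :
    (fun x => log (-(x * log x))) ~[𝓝[>] 0] log := by
  have hloglog : (fun x => log (-log x)) =o[𝓝[>] 0] log :=
    (isLittleO_log_id_atTop.comp_tendsto (tendsto_neg_atBot_atTop.comp tendsto_log_nhdsGT_zero))
      |>.trans_isBigO (isBigO_refl log _).neg_left
  refine (IsEquivalent.refl.add_isLittleO hloglog).congr_left ?_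
  filter_upwards [Ioo_mem_nhdsGT one_pos] with x ⟨hx0, hx1⟩
  rw [Pi.add_apply, ← log_mul hx0.ne' (neg_pos.mpr (log_neg hx0 hx1)).ne', mul_neg]

lemma isEquivalent_log_neg_const_mul_mul_log {k : ℝ} (hk : 0 < k) :
    (fun u => log (-(k * u * log (k * u)))) ~[𝓝[>] 0] log := by
  have hscale : Tendsto (fun u => k * u) (𝓝[>] 0) (𝓝[>] 0) :=
    tendsto_nhdsWithin_of_tendsto_nhds_of_eventually_within _
      (((continuous_const_mul k).tendsto' 0 0 (mul_zero k)).mono_left nhdsWithin_le_nhds)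
      (eventually_mem_nhdsWithin.mono fun u (hu : 0 < u) => mul_pos hk hu)
  have hlog_scale : (fun u => log (k * u)) ~[𝓝[>] 0] log := by
    refine (IsEquivalent.refl.const_add_of_norm_tendsto_atTop (c := log k)
      (tendsto_abs_atBot_atTop.comp tendsto_log_nhdsGT_zero)).congr_left ?_
    filter_upwards [self_mem_nhdsWithin] with u (hu : 0 < u)
    rw [log_mul hk.ne' hu.ne']
  exact (isEquivalent_log_neg_mul_log.comp_tendsto hscale).trans hlog_scale

lemma tendsto_div_neg_sqrt_of_sq_isEquivalent {α : Type*} {l : Filter α} {f g : α → ℝ}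
    (hf : ∀ᶠ x in l, f x < 0) (hfg : (fun x => f x ^ 2) ~[l] g) :
    Tendsto (fun x => f x / -√(g x)) l (𝓝 1) := by
  have hg : ∀ᶠ x in l, 0 < g x := hfg.symm.eventually_pos (hf.mono fun x hx => sq_pos_of_neg hx)
  have hratio := (isEquivalent_iff_tendsto_one (hg.mono fun x hx => hx.ne')).mp hfg
  have hsqrt := (continuous_sqrt.tendsto 1).comp hratio
  rw [sqrt_one] at hsqrt
  refine hsqrt.congr' ?_
  filter_upwards [hf] with x hx
  simp only [Function.comp_apply, Pi.div_apply]
  rw [sqrt_div (sq_nonneg _), sqrt_sq_eq_abs, abs_of_neg hx, div_neg, neg_div]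

namespace StdNormal

lemma pdf_eq_gaussianPDFReal : stdNormalPdf = gaussianPDFReal 0 1 := by
  ext t
  simp [stdNormalPdf, gaussianPDFReal]

lemma pdf_pos (t : ℝ) : 0 < stdNormalPdf t := by
  unfold stdNormalPdf; positivity

lemma pdf_nonneg : 0 ≤ stdNormalPdf := fun t => (pdf_pos t).le

lemma integrable_pdf : Integrable stdNormalPdf :=
  pdf_eq_gaussianPDFReal ▸ integrable_gaussianPDFReal 0 1

lemma integral_pdf : ∫ t, stdNormalPdf t = 1 :=
  pdf_eq_gaussianPDFReal ▸ integral_gaussianPDFReal_eq_one 0 one_ne_zero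

lemma pdf_le_pdf {s t : ℝ} (hst : s ≤ t) (ht : t ≤ 0) : stdNormalPdf s ≤ stdNormalPdf t := by
  unfold stdNormalPdf
  gcongr 2
  nlinarith

lemma cdf_mono : Monotone stdNormalCdf := monotone_setIntegral_Iic integrable_pdf pdf_nonneg

lemma cdf_nonneg (x : ℝ) : 0 ≤ stdNormalCdf x :=
  setIntegral_nonneg measurableSet_Iic fun t _ => pdf_nonneg t

lemma cdf_le_one (x : ℝ) : stdNormalCdf x ≤ 1 :=
  integral_pdf ▸ setIntegral_le_integral integrable_pdf (.of_forall pdf_nonneg)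

-- Chernoff bound: on `t ≤ x ≤ 0` one has `φ t ≤ exp (-x²/2) φ (t - x)`.
lemma cdf_le_exp {x : ℝ} (hx : x ≤ 0) : stdNormalCdf x ≤ exp (-x ^ 2 / 2) := by
  have hshift : Integrable fun t => exp (-x ^ 2 / 2) * stdNormalPdf (t - x) :=
    (integrable_pdf.comp_sub_right x).const_mul _
  calc stdNormalCdf x ≤ ∫ t in Iic x, exp (-x ^ 2 / 2) * stdNormalPdf (t - x) := by
        refine setIntegral_mono_on integrable_pdf.integrableOn hshift.integrableOn
          measurableSet_Iic fun t (ht : t ≤ x) => ?_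
        rw [stdNormalPdf, stdNormalPdf, mul_left_comm, ← exp_add]
        gcongr
        nlinarith
    _ ≤ ∫ t, exp (-x ^ 2 / 2) * stdNormalPdf (t - x) :=
        setIntegral_le_integral hshift (.of_forall fun t => by positivity [pdf_pos (t - x)])
    _ = exp (-x ^ 2 / 2) := by
        rw [integral_const_mul, integral_sub_right_eq_self stdNormalPdf x, integral_pdf, mul_one]

lemma pdf_sub_one_le_cdf {x : ℝ} (hx : x ≤ 0) : stdNormalPdf (x - 1) ≤ stdNormalCdf x :=
  le_setIntegral_Iic_of_le_on_Ioc integrable_pdf pdf_nonneg fun _ ht =>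
    pdf_le_pdf ht.1.le (ht.2.trans hx)

lemma log_pdf (x : ℝ) : log (stdNormalPdf x) = log (√(2 * π))⁻¹ - x ^ 2 / 2 := by
  rw [stdNormalPdf, log_mul (by positivity) (exp_ne_zero _), log_exp]
  ring

end StdNormal

namespace SkewNormal

noncomputable def pdf (l t : ℝ) : ℝ := 2 * stdNormalPdf t * stdNormalCdf (l * t)

lemma pdf_nonneg (l : ℝ) : 0 ≤ pdf l := fun t =>
  mul_nonneg (mul_nonneg zero_le_two (StdNormal.pdf_pos t).le) (StdNormal.cdf_nonneg _)

lemma integrable_pdf (l : ℝ) : Integrable (pdf l) := by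
  have hmeas : Measurable (pdf l) := by
    have : Continuous stdNormalPdf := by unfold stdNormalPdf; fun_prop
    exact (this.measurable.const_mul 2).mul
      (StdNormal.cdf_mono.measurable.comp (measurable_const_mul l))
  refine (StdNormal.integrable_pdf.const_mul 2).mono' hmeas.aestronglyMeasurable
    (.of_forall fun t => ?_)
  rw [Real.norm_of_nonneg (pdf_nonneg l t), pdf]
  exact mul_le_of_le_one_right (by positivity [StdNormal.pdf_pos t]) (StdNormal.cdf_le_one _)

lemma cdf_mono (l : ℝ) : Monotone (skewNormalCdf l) :=
  monotone_setIntegral_Iic (integrable_pdf l) (pdf_nonneg l)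

variable {l : ℝ}

lemma cdf_le_exp (hl : 0 < l) {z : ℝ} (hz : z ≤ 0) :
    skewNormalCdf l z ≤ 2 * exp (-(1 + l ^ 2) / 2 * z ^ 2) :=
  calc skewNormalCdf l z ≤ ∫ t in Iic z, stdNormalCdf (l * z) * (2 * stdNormalPdf t) := by
        refine setIntegral_mono_on (integrable_pdf l).integrableOn
          ((StdNormal.integrable_pdf.const_mul 2).const_mul _).integrableOn measurableSet_Iic
          fun t (ht : t ≤ z) => ?_
        rw [mul_comm]
        exact mul_le_mul_of_nonneg_right (StdNormal.cdf_mono (by gcongr))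
          (by positivity [StdNormal.pdf_pos t])
    _ = stdNormalCdf (l * z) * (2 * stdNormalCdf z) := by
        rw [integral_const_mul, integral_const_mul]; rfl
    _ ≤ exp (-(l * z) ^ 2 / 2) * (2 * exp (-z ^ 2 / 2)) :=
        mul_le_mul (StdNormal.cdf_le_exp (mul_nonpos_of_nonneg_of_nonpos hl.le hz))
          (by gcongr; exact StdNormal.cdf_le_exp hz)
          (by positivity [StdNormal.cdf_nonneg z]) (exp_pos _).le
    _ = 2 * exp (-(1 + l ^ 2) / 2 * z ^ 2) := by
        rw [mul_left_comm, ← exp_add]; ring_nf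

lemma pdf_mul_pdf_le_cdf (hl : 0 < l) {z : ℝ} (hz : z ≤ 0) :
    2 * stdNormalPdf (z - 1) * stdNormalPdf (l * (z - 1) - 1) ≤ skewNormalCdf l z := by
  refine le_setIntegral_Iic_of_le_on_Ioc (integrable_pdf l) (pdf_nonneg l) fun t ht => ?_
  have hlz : l * (z - 1) ≤ 0 := mul_nonpos_of_nonneg_of_nonpos hl.le (by linarith)
  have hpdf : stdNormalPdf (z - 1) ≤ stdNormalPdf t :=
    StdNormal.pdf_le_pdf ht.1.le (ht.2.trans hz)
  have hcdf : stdNormalPdf (l * (z - 1) - 1) ≤ stdNormalCdf (l * t) :=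
    (StdNormal.pdf_sub_one_le_cdf hlz).trans (StdNormal.cdf_mono (by gcongr; exact ht.1.le))
  exact mul_le_mul (by linarith) hcdf (StdNormal.pdf_pos _).le
    (by positivity [StdNormal.pdf_pos t])

lemma cdf_pos (hl : 0 < l) (z : ℝ) : 0 < skewNormalCdf l z := by
  refine lt_of_lt_of_le ?_ ((pdf_mul_pdf_le_cdf hl (min_le_right z 0)).trans
    (cdf_mono l (min_le_left z 0)))
  positivity [StdNormal.pdf_pos (min z 0 - 1), StdNormal.pdf_pos (l * (min z 0 - 1) - 1)]

lemma log_cdf_isEquivalent (hl : 0 < l) :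
    (fun z => log (skewNormalCdf l z)) ~[atBot] fun z => -(1 + l ^ 2) / 2 * z ^ 2 := by
  have hC : -(1 + l ^ 2) / 2 ≠ 0 := by nlinarith [sq_nonneg l]
  refine isEquivalent_sq_of_quadratic_bounds
    (A := log 2 + 2 * log (√(2 * π))⁻¹ - 1 / 2 - (l + 1) ^ 2 / 2) (B := 1 + l * (l + 1))
    (A' := log 2) (B' := 0) hC ?_ ?_
  · filter_upwards [eventually_le_atBot 0] with z hz
    have hpos := mul_pos (mul_pos two_pos (StdNormal.pdf_pos (z - 1)))
      (StdNormal.pdf_pos (l * (z - 1) - 1))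
    calc _ = log (2 * stdNormalPdf (z - 1) * stdNormalPdf (l * (z - 1) - 1)) := by
          rw [log_mul (mul_pos two_pos (StdNormal.pdf_pos _)).ne' (StdNormal.pdf_pos _).ne',
            log_mul two_ne_zero (StdNormal.pdf_pos _).ne', StdNormal.log_pdf, StdNormal.log_pdf]
          ring
      _ ≤ log (skewNormalCdf l z) := log_le_log hpos (pdf_mul_pdf_le_cdf hl hz)
  · filter_upwards [eventually_le_atBot 0] with z hz
    calc log (skewNormalCdf l z) ≤ log (2 * exp (-(1 + l ^ 2) / 2 * z ^ 2)) :=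
          log_le_log (cdf_pos hl z) (cdf_le_exp hl hz)
      _ = _ := by rw [log_mul two_ne_zero (exp_ne_zero _), log_exp]; ring

end SkewNormal

/-- For l > 0, the quantile function of SN(l) satisfies
F⁻¹(u) ~ -√(-(2/(1+l²)) log(-2πl u log(2πl u))) as u → 0⁺. -/
theorem skewNormal_quantile_asymp_pos (l : ℝ) (hl : 0 < l) (Q : ℝ → ℝ)
    (hQ : ∀ u ∈ Set.Ioo (0 : ℝ) 1, skewNormalCdf l (Q u) = u) :
    Tendsto (fun u : ℝ =>
      Q u / (-Real.sqrt (-(2 / (1 + l ^ 2)) *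
        Real.log (-(2 * π * l * u * Real.log (2 * π * l * u))))))
      (nhdsWithin 0 (Set.Ioi 0)) (nhds 1) := by
  have hQ' : ∀ᶠ u in 𝓝[>] 0, skewNormalCdf l (Q u) = u := by
    filter_upwards [Ioo_mem_nhdsGT one_pos] with u hu using hQ u hu
  have hQ_bot : Tendsto Q (𝓝[>] 0) atBot :=
    tendsto_atBot_of_apply_eq (SkewNormal.cdf_mono l) (SkewNormal.cdf_pos hl)
      nhdsWithin_le_nhds hQ'
  have hlog_u : log ~[𝓝[>] 0] fun u => -(1 + l ^ 2) / 2 * Q u ^ 2 := by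
    refine ((SkewNormal.log_cdf_isEquivalent hl).comp_tendsto hQ_bot).congr_left ?_
    filter_upwards [hQ'] with u hu
    simp only [Function.comp_apply, hu]
  have hlog_v : (fun u => log (-(2 * π * l * u * log (2 * π * l * u))))
      ~[𝓝[>] 0] fun u => -(1 + l ^ 2) / 2 * Q u ^ 2 :=
    (isEquivalent_log_neg_const_mul_mul_log (by positivity)).trans hlog_u
  refine tendsto_div_neg_sqrt_of_sq_isEquivalent (hQ_bot.eventually_lt_atBot 0) ?_
  refine (IsEquivalent.refl.mul hlog_v).symm.congr_left (.of_forall fun u => ?_)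
  have hl2 : 1 + l ^ 2 ≠ 0 := by positivity
  simp only [Pi.mul_apply]
  field_simp
end

section
/- Let F be a continuous strictly increasing distribution function and suppose y : (0,δ) → ℝ is such that -y(u) is slowly varying as u → 0⁺, y(u) → -∞ as u → 0⁺, and F(y(u))/u → 1 as u → 0⁺. Then F⁻¹(u) ~ y(u) as u → 0⁺. -/
open Real Filter Set

/-- Fung–Seneta (2011), Theorem 1: if F is a continuous strictly increasing distribution
function, -y(u) is slowly varying as u → 0⁺, y(u) → -∞ and F(y(u))/u → 1 as u → 0⁺,
then F⁻¹(u) ~ y(u) as u → 0⁺. -/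
theorem quantile_asymptotic_of_slowly_varying (F : ℝ → ℝ) (y : ℝ → ℝ) (Q : ℝ → ℝ)
    (hFcont : Continuous F) (hFmono : StrictMono F)
    (hF0 : Tendsto F atBot (nhds 0)) (hF1 : Tendsto F atTop (nhds 1))
    (hQ : ∀ u ∈ Set.Ioo (0 : ℝ) 1, F (Q u) = u)
    (hySV : ∀ t : ℝ, 0 < t →
      Tendsto (fun u : ℝ => (-y (t * u)) / (-y u)) (nhdsWithin 0 (Set.Ioi 0)) (nhds 1))
    (hyneg : Tendsto y (nhdsWithin (0 : ℝ) (Set.Ioi 0)) atBot)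
    (hFy : Tendsto (fun u : ℝ => F (y u) / u) (nhdsWithin 0 (Set.Ioi 0)) (nhds 1)) :
    Tendsto (fun u : ℝ => Q u / y u) (nhdsWithin 0 (Set.Ioi 0)) (nhds 1) := by
  have hmap : ∀ c : ℝ, 0 < c → Tendsto (fun u : ℝ => c * u)
      (nhdsWithin 0 (Set.Ioi 0)) (nhdsWithin 0 (Set.Ioi 0)) := by
    intro c hc
    apply tendsto_nhdsWithin_of_tendsto_nhds_of_eventually_within
    · have : Tendsto (fun u : ℝ => c * u) (nhds 0) (nhds (c * 0)) :=
        (continuous_const.mul continuous_id).tendsto 0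
      simpa using this.mono_left nhdsWithin_le_nhds
    · filter_upwards [self_mem_nhdsWithin] with u hu
      exact mul_pos hc hu
  have h2 : Tendsto (fun u : ℝ => F (y (2 * u)) / (2 * u))
      (nhdsWithin 0 (Set.Ioi 0)) (nhds 1) := hFy.comp (hmap 2 two_pos)
  have hhalf : Tendsto (fun u : ℝ => F (y ((1/2) * u)) / ((1/2) * u))
      (nhdsWithin 0 (Set.Ioi 0)) (nhds 1) := hFy.comp (hmap (1/2) (by norm_num))
  have hA : ∀ᶠ u in nhdsWithin (0:ℝ) (Set.Ioi 0), u < F (y (2 * u)) := by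
    filter_upwards [h2.eventually (eventually_gt_nhds (by norm_num : (3/4:ℝ) < 1)),
      self_mem_nhdsWithin] with u h hu
    have hu' : (0:ℝ) < 2 * u := mul_pos two_pos hu
    rw [lt_div_iff₀ hu'] at h
    nlinarith
  have hB : ∀ᶠ u in nhdsWithin (0:ℝ) (Set.Ioi 0), F (y ((1/2) * u)) < u := by
    filter_upwards [hhalf.eventually (eventually_lt_nhds (by norm_num : (1:ℝ) < 3/2)),
      self_mem_nhdsWithin] with u h hu
    have hu' : (0:ℝ) < (1/2) * u := mul_pos (by norm_num) hu
    rw [div_lt_iff₀ hu'] at h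
    nlinarith
  have h01 : ∀ᶠ u in nhdsWithin (0:ℝ) (Set.Ioi 0), u ∈ Set.Ioo (0:ℝ) 1 := by
    filter_upwards [self_mem_nhdsWithin,
      (eventually_lt_nhds (by norm_num : (0:ℝ) < 1)).filter_mono nhdsWithin_le_nhds]
      with u hu hu1
    exact ⟨hu, hu1⟩
  have hy0 : ∀ᶠ u in nhdsWithin (0:ℝ) (Set.Ioi 0), y u < 0 :=
    hyneg.eventually (eventually_lt_atBot 0)
  have hsand : ∀ᶠ u in nhdsWithin (0:ℝ) (Set.Ioi 0),
      (-y (2 * u)) / (-y u) ≤ Q u / y u ∧ Q u / y u ≤ (-y ((1/2) * u)) / (-y u) := by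
    filter_upwards [hA, hB, h01, hy0] with u hAu hBu h01u hy0u
    have hFQ : F (Q u) = u := hQ u h01u
    have hQlt : Q u < y (2 * u) := hFmono.lt_iff_lt.mp (by rw [hFQ]; exact hAu)
    have hltQ : y ((1/2) * u) < Q u := hFmono.lt_iff_lt.mp (by rw [hFQ]; exact hBu)
    have hden : (0:ℝ) < -y u := by linarith
    have hrw : Q u / y u = (-Q u) / (-y u) := (neg_div_neg_eq _ _).symm
    rw [hrw]
    constructor
    · gcongr
    · gcongr
  exact tendsto_of_tendsto_of_tendsto_of_le_of_le' (hySV 2 two_pos)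
    (hySV (1/2) (by norm_num)) (hsand.mono fun u h => h.1) (hsand.mono fun u h => h.2)
end

section
/- If (Z₁*, Z₂*) is bivariate standard normal with correlation r ∈ (-1,1), then max(Z₁*, Z₂*) has the univariate skew normal distribution SN(β) with β = √((1-r)/(1+r)); i.e., its density is 2φ(z)Φ(βz). -/
open Real MeasureTheory Filter Set

/-- Bivariate standard normal density with correlation r. -/
noncomputable def biNormalPdf (r : ℝ) (p : ℝ × ℝ) : ℝ :=
  (2 * π * Real.sqrt (1 - r ^ 2))⁻¹ *
    Real.exp (-(p.1 ^ 2 - 2 * r * p.1 * p.2 + p.2 ^ 2) / (2 * (1 - r ^ 2)))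

/-! The density is symmetric under swapping the coordinates and the diagonal is null, so
`P(max ≤ z) = 2 P(Z₂ ≤ Z₁ ≤ z)`. Completing the square factors the density as `φ(x)` times
the `N(r x, 1 - r²)` density in `y`, so integrating over `y ≤ x` leaves
`φ(x) Φ((1 - r) x / √(1 - r²)) = φ(x) Φ(β x)`. -/

lemma setIntegral_Iic_comp_sub_div {E : Type*} [NormedAddCommGroup E] [NormedSpace ℝ E]
    (g : ℝ → E) {c : ℝ} (hc : 0 < c) (m t : ℝ) :
    ∫ y in Iic t, g ((y - m) / c) = c • ∫ u in Iic ((t - m) / c), g u := by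
  have hind : (Iic t).indicator (fun y => g ((y - m) / c))
      = fun y => (Iic ((t - m) / c)).indicator g ((y - m) / c) := by
    ext y
    simp only [indicator_apply, mem_Iic, div_le_div_iff_of_pos_right hc, sub_le_sub_iff_right]
  rw [← integral_indicator measurableSet_Iic, hind,
    integral_sub_right_eq_self (fun u => (Iic ((t - m) / c)).indicator g (u / c)) m,
    Measure.integral_comp_div, abs_of_pos hc, integral_indicator measurableSet_Iic]

lemma volume_diagonal_eq_zero : volume {p : ℝ × ℝ | p.2 = p.1} = 0 := by
  have hmeas : MeasurableSet {p : ℝ × ℝ | p.2 = p.1} :=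
    measurableSet_eq_fun measurable_snd measurable_fst
  rw [Measure.volume_eq_prod, Measure.measure_prod_null hmeas]
  refine .of_forall fun x => ?_
  simp [preimage]

lemma setIntegral_max_le_eq_two_mul {E : Type*} [NormedAddCommGroup E] [NormedSpace ℝ E]
    {f : ℝ × ℝ → E} (hf : Integrable f) (hsymm : ∀ p, f p.swap = f p) (z : ℝ) :
    ∫ p in {p : ℝ × ℝ | max p.1 p.2 ≤ z}, f p
      = (2 : ℝ) • ∫ p in {p : ℝ × ℝ | p.1 ≤ z ∧ p.2 ≤ p.1}, f p := by
  set A := {p : ℝ × ℝ | p.1 ≤ z ∧ p.2 ≤ p.1}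
  have hA : MeasurableSet A :=
    (measurableSet_le measurable_fst measurable_const).inter
      (measurableSet_le measurable_snd measurable_fst)
  have hunion : {p : ℝ × ℝ | max p.1 p.2 ≤ z} = A ∪ Prod.swap ⁻¹' A := by
    ext ⟨x, y⟩
    simp only [mem_ofPred_eq, mem_union, mem_preimage, Prod.swap_prod_mk, max_le_iff, A]
    constructor
    · rintro ⟨hx, hy⟩; rcases le_total y x with h | h <;> simp_all
    · rintro (⟨hx, h⟩ | ⟨hy, h⟩) <;> constructor <;> linarith
  have hdisj : AEDisjoint volume A (Prod.swap ⁻¹' A) :=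
    measure_mono_null (fun p ⟨h, h'⟩ => le_antisymm h.2 h'.2) volume_diagonal_eq_zero
  have hswap : ∫ p in Prod.swap ⁻¹' A, f p = ∫ p in A, f p := by
    rw [Measure.volume_eq_prod]
    conv_lhs => enter [2, p]; rw [← hsymm p]
    exact Measure.measurePreserving_swap.setIntegral_preimage_emb
      MeasurableEquiv.prodComm.measurableEmbedding f A
  rw [hunion, setIntegral_union₀ hdisj (hA.preimage measurable_swap).nullMeasurableSet
    hf.integrableOn hf.integrableOn, hswap, two_smul]

lemma setIntegral_le_fst_eq_iterated {E : Type*} [NormedAddCommGroup E] [NormedSpace ℝ E]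
    {f : ℝ × ℝ → E} (hf : Integrable f) (z : ℝ) :
    ∫ p in {p : ℝ × ℝ | p.1 ≤ z ∧ p.2 ≤ p.1}, f p = ∫ x in Iic z, ∫ y in Iic x, f (x, y) := by
  have hA : MeasurableSet {p : ℝ × ℝ | p.1 ≤ z ∧ p.2 ≤ p.1} :=
    (measurableSet_le measurable_fst measurable_const).inter
      (measurableSet_le measurable_snd measurable_fst)
  rw [← integral_indicator hA, Measure.volume_eq_prod, integral_prod _ (hf.indicator hA),
    ← integral_indicator measurableSet_Iic]
  congr 1 with x
  by_cases hx : x ≤ z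
  · rw [indicator_of_mem (mem_Iic.mpr hx), ← integral_indicator measurableSet_Iic]
    simp [indicator_apply, hx]
  · simp [hx]

lemma biNormalPdf_swap (r : ℝ) (p : ℝ × ℝ) : biNormalPdf r p.swap = biNormalPdf r p := by
  simp only [biNormalPdf, Prod.fst_swap, Prod.snd_swap]
  ring_nf

lemma biNormalPdf_eq_mul {r : ℝ} (hr : r ^ 2 < 1) (x y : ℝ) :
    biNormalPdf r (x, y) = stdNormalPdf x *
      ((√(1 - r ^ 2))⁻¹ * stdNormalPdf ((y - r * x) / √(1 - r ^ 2))) := by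
  have hs : 0 < 1 - r ^ 2 := by linarith
  have hexp : -(x ^ 2 - 2 * r * x * y + y ^ 2) / (2 * (1 - r ^ 2))
      = -x ^ 2 / 2 + -((y - r * x) / √(1 - r ^ 2)) ^ 2 / 2 := by
    rw [div_pow, sq_sqrt hs.le]
    field_simp
    ring
  have hconst : (2 * π * √(1 - r ^ 2))⁻¹ = (√(2 * π))⁻¹ * (√(2 * π))⁻¹ * (√(1 - r ^ 2))⁻¹ := by
    rw [← mul_inv, ← mul_inv, mul_self_sqrt (by positivity)]
  rw [biNormalPdf, stdNormalPdf, stdNormalPdf, hexp, exp_add, hconst]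
  ring

lemma integrable_biNormalPdf {r : ℝ} (hr : r ^ 2 < 1) : Integrable (biNormalPdf r) := by
  have hs : 0 < 1 - r ^ 2 := by linarith
  set C := (2 * π * √(1 - r ^ 2))⁻¹
  have hbound : ∀ p : ℝ × ℝ,
      ‖biNormalPdf r p‖ ≤ C * (exp (-(1 / 4) * p.1 ^ 2) * exp (-(1 / 4) * p.2 ^ 2)) := by
    rintro ⟨x, y⟩
    -- x² - 2rxy + y² - (1 - r²)(x² + y²)/2 = ((y - rx)² + (x - ry)²)/2
    have hexp : -(x ^ 2 - 2 * r * x * y + y ^ 2) / (2 * (1 - r ^ 2))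
        ≤ -(1 / 4) * x ^ 2 + -(1 / 4) * y ^ 2 := by
      rw [div_le_iff₀ (by positivity)]
      nlinarith [sq_nonneg (y - r * x), sq_nonneg (x - r * y)]
    rw [biNormalPdf, norm_of_nonneg (by positivity), ← exp_add]
    gcongr
  have hcont : Continuous (biNormalPdf r) := by
    unfold biNormalPdf
    fun_prop
  have hdom : Integrable fun p : ℝ × ℝ ↦
      C * (exp (-(1 / 4) * p.1 ^ 2) * exp (-(1 / 4) * p.2 ^ 2)) := by
    rw [Measure.volume_eq_prod]
    exact ((integrable_exp_neg_mul_sq (by norm_num)).mul_prod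
      (integrable_exp_neg_mul_sq (by norm_num))).const_mul C
  exact hdom.mono' hcont.aestronglyMeasurable (.of_forall hbound)

lemma setIntegral_Iic_biNormalPdf {r : ℝ} (hr : r ^ 2 < 1) (x : ℝ) :
    ∫ y in Iic x, biNormalPdf r (x, y)
      = stdNormalPdf x * stdNormalCdf ((1 - r) * x / √(1 - r ^ 2)) := by
  have hσ : 0 < √(1 - r ^ 2) := sqrt_pos.mpr (by linarith)
  simp_rw [biNormalPdf_eq_mul hr, integral_const_mul, setIntegral_Iic_comp_sub_div _ hσ,
    smul_eq_mul, inv_mul_cancel_left₀ hσ.ne', stdNormalCdf]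
  ring_nf

lemma one_sub_div_sqrt_one_sub_sq {r : ℝ} (hr : -1 < r) (hr' : r < 1) :
    (1 - r) / √(1 - r ^ 2) = √((1 - r) / (1 + r)) := by
  have hq : (1 - r) / (1 + r) * (1 - r ^ 2) = (1 - r) ^ 2 := by
    field_simp [(by linarith : 1 + r ≠ 0)]
    ring
  rw [div_eq_iff (sqrt_pos.mpr (by nlinarith)).ne',
    ← sqrt_mul (div_nonneg (by linarith) (by linarith)), hq, sqrt_sq (by linarith)]

/-- Roberts (1966)/Loperfido (2002): if (Z₁*, Z₂*) is bivariate standard normal with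
correlation r ∈ (-1,1), then max(Z₁*, Z₂*) ~ SN(β) with β = √((1-r)/(1+r)):
its cdf equals the skew normal cdf with density 2φ(z)Φ(βz). -/
theorem max_biNormal_is_skewNormal (r : ℝ) (hr : -1 < r) (hr' : r < 1) :
    ∀ z : ℝ,
      (∫ p in {p : ℝ × ℝ | max p.1 p.2 ≤ z}, biNormalPdf r p) =
        ∫ t in Set.Iic z,
          2 * stdNormalPdf t * stdNormalCdf (Real.sqrt ((1 - r) / (1 + r)) * t) := by
  intro z
  have hr2 : r ^ 2 < 1 := by nlinarith
  have hinner : ∀ x, ∫ y in Iic x, biNormalPdf r (x, y)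
      = stdNormalPdf x * stdNormalCdf (√((1 - r) / (1 + r)) * x) := fun x => by
    rw [setIntegral_Iic_biNormalPdf hr2, mul_div_right_comm, one_sub_div_sqrt_one_sub_sq hr hr']
  rw [setIntegral_max_le_eq_two_mul (integrable_biNormalPdf hr2) (biNormalPdf_swap r),
    setIntegral_le_fst_eq_iterated (integrable_biNormalPdf hr2), smul_eq_mul,
    ← integral_const_mul]
  simp only [hinner, mul_assoc]
end

section
/- Let X ~ SN₂(θ⃗, R) with θ⃗ = (θ,θ), θ ∈ ℝ, and R having off-diagonal ρ. Then X can be represented in distribution as αV·(1,1) + Z, where α = θ(1+ρ)/√(1+2θ²(1+ρ)), V = |W| with W standard normal independent of Z, and Z is bivariate normal with mean 0 and covariance Ψ = R - (1+θ⃗ᵀRθ⃗)^{-1} Rθ⃗θ⃗ᵀR, with Ψ having diagonal entries (1+θ²(1-ρ²))/(1+2θ²(1+ρ)) and off-diagonal (ρ-θ²(1-ρ²))/(1+2θ²(1+ρ)). -/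
/-!
Put `u = √(1 + θ⃗ᵀRθ⃗)`. Since `det Ψ = det R / u²`, completing the square in `w = u v` splits
the exponent of the half-normal weight times the `N₂(0, Ψ)` density at `p - (θ(1+ρ)/u) v (1,1)`
into that of `φ₂(p, R)` plus `-(w - θ⃗ᵀp)² / 2`. The Jacobian `1/u` cancels the factor `u`
coming from `√det Ψ`, and integrating the Gaussian in `w` over `w > 0` gives `√(2π) Φ(θ⃗ᵀp)`.
-/

open Real MeasureTheory Filter Set

noncomputable def biSkewNormalPdf (θ ρ : ℝ) (p : ℝ × ℝ) : ℝ :=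
  2 * biNormalPdf ρ p * stdNormalCdf (θ * p.1 + θ * p.2)

/-- Bivariate centred normal density with covariance matrix [[s,c],[c,s]]. -/
noncomputable def biNormalPdfCov (s c : ℝ) (p : ℝ × ℝ) : ℝ :=
  (2 * π * Real.sqrt (s ^ 2 - c ^ 2))⁻¹ *
    Real.exp (-(s * p.1 ^ 2 - 2 * c * p.1 * p.2 + s * p.2 ^ 2) / (2 * (s ^ 2 - c ^ 2)))

/-- Half-normal density. -/
noncomputable def halfNormalPdf (v : ℝ) : ℝ :=
  if 0 < v then Real.sqrt (2 / π) * Real.exp (-v ^ 2 / 2) else 0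

theorem setIntegral_Ioi_zero_comp_sub_left {E : Type*} [NormedAddCommGroup E] [NormedSpace ℝ E]
    (f : ℝ → E) (m : ℝ) :
    ∫ w in Ioi (0 : ℝ), f (m - w) = ∫ t in Iic m, f t := by
  have hpres := Measure.measurePreserving_sub_left (volume : Measure ℝ) m
  have hemb := (Homeomorph.subLeft m).measurableEmbedding
  rw [← integral_Ici_eq_integral_Ioi, ← hpres.setIntegral_preimage_emb hemb f (Iic m)]
  congr 2
  ext w
  simp

theorem setIntegral_Ioi_zero_exp_neg_sq_mul_sub (m : ℝ) {u : ℝ} (hu : 0 < u) :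
    ∫ v in Ioi (0 : ℝ), exp (-(u * v - m) ^ 2 / 2) = √(2 * π) / u * stdNormalCdf m := by
  have hsym : ∀ w : ℝ, -(w - m) ^ 2 / 2 = -(m - w) ^ 2 / 2 := fun w => by ring
  rw [integral_comp_mul_left_Ioi (fun w => exp (-(w - m) ^ 2 / 2)) 0 hu, mul_zero, smul_eq_mul]
  simp_rw [hsym]
  rw [setIntegral_Ioi_zero_comp_sub_left (fun t => exp (-t ^ 2 / 2)) m, stdNormalCdf]
  simp only [stdNormalPdf, integral_const_mul]
  field_simp

/-- `1 + θ⃗ᵀRθ⃗` for `θ⃗ = (θ, θ)`. -/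
def skewDenom (θ ρ : ℝ) : ℝ := 1 + 2 * θ ^ 2 * (1 + ρ)

/-- `Ψ = R - (1 + θ⃗ᵀRθ⃗)⁻¹ Rθ⃗θ⃗ᵀR` has diagonal entries `psiDiag θ ρ` and off-diagonal entries
`psiOffDiag θ ρ`. -/
noncomputable def psiDiag (θ ρ : ℝ) : ℝ := (1 + θ ^ 2 * (1 - ρ ^ 2)) / skewDenom θ ρ

noncomputable def psiOffDiag (θ ρ : ℝ) : ℝ := (ρ - θ ^ 2 * (1 - ρ ^ 2)) / skewDenom θ ρ

section

variable {θ ρ : ℝ}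

theorem skewDenom_pos (hρ : -1 ≤ ρ) : 0 < skewDenom θ ρ := by
  unfold skewDenom
  nlinarith [sq_nonneg θ]

theorem psiDiag_sq_sub_psiOffDiag_sq (hD : skewDenom θ ρ ≠ 0) :
    psiDiag θ ρ ^ 2 - psiOffDiag θ ρ ^ 2 = (1 - ρ ^ 2) / skewDenom θ ρ := by
  unfold psiDiag psiOffDiag
  field_simp
  unfold skewDenom
  ring

theorem halfNormal_exponent_add_psi_exponent (hD : skewDenom θ ρ ≠ 0) (hρ : 1 - ρ ^ 2 ≠ 0)
    (x y w : ℝ) :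
    -(w ^ 2 / skewDenom θ ρ) / 2 +
        -(psiDiag θ ρ * (x - θ * (1 + ρ) * w / skewDenom θ ρ) ^ 2
          - 2 * psiOffDiag θ ρ * (x - θ * (1 + ρ) * w / skewDenom θ ρ)
            * (y - θ * (1 + ρ) * w / skewDenom θ ρ)
          + psiDiag θ ρ * (y - θ * (1 + ρ) * w / skewDenom θ ρ) ^ 2)
          / (2 * ((1 - ρ ^ 2) / skewDenom θ ρ)) =
      -(x ^ 2 - 2 * ρ * x * y + y ^ 2) / (2 * (1 - ρ ^ 2)) + -(w - (θ * x + θ * y)) ^ 2 / 2 := by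
  unfold psiDiag psiOffDiag
  field_simp
  unfold skewDenom
  ring

theorem halfNormalPdf_mul_biNormalPdfCov_psi (hρ : 1 - ρ ^ 2 ≠ 0) {u v : ℝ} (hu : 0 < u)
    (hu2 : u ^ 2 = skewDenom θ ρ) (hv : 0 < v) (p : ℝ × ℝ) :
    halfNormalPdf v *
        biNormalPdfCov (psiDiag θ ρ) (psiOffDiag θ ρ)
          (p.1 - θ * (1 + ρ) / u * v, p.2 - θ * (1 + ρ) / u * v) =
      √(2 / π) * u * biNormalPdf ρ p * exp (-(u * v - (θ * p.1 + θ * p.2)) ^ 2 / 2) := by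
  have hD : skewDenom θ ρ ≠ 0 := hu2 ▸ by positivity
  have hshift : θ * (1 + ρ) / u * v = θ * (1 + ρ) * (u * v) / skewDenom θ ρ := by
    rw [← hu2]; field_simp
  have hv2 : v ^ 2 = (u * v) ^ 2 / skewDenom θ ρ := by
    rw [← hu2]; field_simp
  have hsqrt : √((1 - ρ ^ 2) / skewDenom θ ρ) = √(1 - ρ ^ 2) / u := by
    rw [sqrt_div' _ (hu2 ▸ sq_nonneg u), ← hu2, sqrt_sq hu.le]
  simp only [halfNormalPdf, if_pos hv, biNormalPdfCov, biNormalPdf,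
    psiDiag_sq_sub_psiOffDiag_sq hD, hsqrt, hshift, hv2]
  rw [mul_mul_mul_comm, ← exp_add,
    halfNormal_exponent_add_psi_exponent hD hρ p.1 p.2 (u * v), exp_add]
  field_simp

end

/-- Normal mean-mixture representation of the equi-skew bivariate skew normal:
X ≐ αV·(1,1) + Z, expressed as the identity of densities: the SN₂ density equals the
mixture over the half-normal variable V of the bivariate normal density with covariance Ψ,
whose diagonal entries are (1+θ²(1-ρ²))/(1+2θ²(1+ρ)) and off-diagonal entries
(ρ-θ²(1-ρ²))/(1+2θ²(1+ρ)). -/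
theorem biSkewNormal_mixture_representation (θ ρ : ℝ) (hρ : -1 < ρ) (hρ' : ρ < 1) :
    ∀ p : ℝ × ℝ,
      biSkewNormalPdf θ ρ p =
        ∫ v in Set.Ioi (0 : ℝ), halfNormalPdf v *
          biNormalPdfCov ((1 + θ ^ 2 * (1 - ρ ^ 2)) / (1 + 2 * θ ^ 2 * (1 + ρ)))
            ((ρ - θ ^ 2 * (1 - ρ ^ 2)) / (1 + 2 * θ ^ 2 * (1 + ρ)))
            (p.1 - θ * (1 + ρ) / Real.sqrt (1 + 2 * θ ^ 2 * (1 + ρ)) * v,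
             p.2 - θ * (1 + ρ) / Real.sqrt (1 + 2 * θ ^ 2 * (1 + ρ)) * v) := by
  intro p
  have hD : 0 < skewDenom θ ρ := skewDenom_pos hρ.le
  have hu : 0 < √(skewDenom θ ρ) := sqrt_pos.mpr hD
  have hρ2 : 1 - ρ ^ 2 ≠ 0 := by nlinarith
  have hπ : √(2 / π) * √(2 * π) = 2 := by
    rw [← sqrt_mul (by positivity), show 2 / π * (2 * π) = 2 ^ 2 by field_simp, sqrt_sq two_pos.le]
  symm
  calc _ = ∫ v in Ioi (0 : ℝ), √(2 / π) * √(skewDenom θ ρ) * biNormalPdf ρ p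
          * exp (-(√(skewDenom θ ρ) * v - (θ * p.1 + θ * p.2)) ^ 2 / 2) :=
        setIntegral_congr_fun measurableSet_Ioi fun v hv =>
          halfNormalPdf_mul_biNormalPdfCov_psi hρ2 hu (sq_sqrt hD.le) hv p
    _ = biSkewNormalPdf θ ρ p := by
        rw [integral_const_mul, setIntegral_Ioi_zero_exp_neg_sq_mul_sub _ hu, biSkewNormalPdf]
        generalize stdNormalCdf (θ * p.1 + θ * p.2) = Φ
        field_simp
        linear_combination biNormalPdf ρ p * Φ * hπ
end
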